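/- Logarithmic decomposition of the Gács–Körner common information: let X : Ω → α and Y : Ω → β be random variables on a finite probability space, let ≈ be the equivalence relation on Ω generated by the relation {(ω, ω′) : X(ω) = X(ω′) or Y(ω) = Y(ω′)}, and let Z : Ω → Ω/≈ be the quotient map. Then C(Z) ⊆ C(X) ∩ C(Y), and the Gács–Körner common information sup{ H(f ∘ X) : f : α → γ, g : β → γ with f ∘ X = g ∘ Y } equals Σ_{S ∈ C(Z)} L°(S). -/

import Mathlib

open Finset
open scoped Classical

/-- The total loss of a finite family of reals:
`L(p_1, …, p_n) = Σ_i p_i log(1/p_i) − (Σ_i p_i) log(1/Σ_i p_i)`. -/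
noncomputable def totalLoss {ι : Type*} (s : Finset ι) (p : ι → ℝ) : ℝ :=
  ∑ i ∈ s, p i * Real.log (1 / p i) - (∑ i ∈ s, p i) * Real.log (1 / ∑ i ∈ s, p i)

/-- The interior loss, defined by inclusion–exclusion:
`L°(p_1, …, p_n) = Σ_{S ⊆ {1,…,n}} (−1)^{n−|S|} L((p_i)_{i∈S})`. -/
noncomputable def interiorLoss {ι : Type*} [DecidableEq ι] (s : Finset ι) (p : ι → ℝ) : ℝ :=
  ∑ T ∈ s.powerset, (-1 : ℝ) ^ (s.card - T.card) * totalLoss T p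

/-- The probability that the random variable `X : Ω → α` takes the value `a`,
with respect to the mass function `P`. -/
noncomputable def probOf {Ω α : Type*} [Fintype Ω] (P : Ω → ℝ) (X : Ω → α) (a : α) : ℝ :=
  ∑ ω ∈ Finset.univ.filter (fun ω => X ω = a), P ω

/-- The Shannon entropy `H(X) = Σ_{a ∈ X(Ω)} P(X = a) log(1/P(X = a))` of a random
variable `X : Ω → α` with respect to the mass function `P`. -/
noncomputable def entropy {Ω α : Type*} [Fintype Ω] (P : Ω → ℝ) (X : Ω → α) : ℝ :=
  ∑ a ∈ Finset.univ.image X, probOf P X a * Real.log (1 / probOf P X a)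

/-- The content `C(X)` of a random variable `X : Ω → α`: the collection of subsets
`S ⊆ Ω` with `|S| ≥ 2` on which `X` is not constant. -/
noncomputable def content {Ω α : Type*} [Fintype Ω] (X : Ω → α) : Finset (Finset Ω) :=
  Finset.univ.filter (fun S => 2 ≤ S.card ∧ ∃ ω ∈ S, ∃ ω2 ∈ S, X ω ≠ X ω2)

/-!
Möbius inversion on the Boolean lattice gives `L(S) = Σ_{T ⊆ S} L°(T)`. Since `Σ P = 1`, the
entropy of any `W` is `L(Ω) − Σ_a L(W⁻¹ a)`, and the subsets of a single fibre of `W` are exactly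
the subsets on which `W` is constant, so `H(W) = Σ_{S ∈ C(W)} L°(S)`. The quotient map `Z` is the
finest common coarsening of `X` and `Y`: every `f ∘ X = g ∘ Y` factors through `Z`, and coarsening
cannot increase entropy, so `H(Z)` is the largest common information.
-/

section Loss

variable {ι : Type*} [DecidableEq ι] (p : ι → ℝ)

@[simp]
lemma interiorLoss_empty : interiorLoss ∅ p = 0 := by
  simp [interiorLoss, totalLoss]

lemma sum_Icc_neg_one_pow_card_sub {s t : Finset ι} (hst : s ⊆ t) :
    ∑ u ∈ Icc s t, (-1 : ℝ) ^ (#u - #s) = if s = t then 1 else 0 := by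
  have hinj : Set.InjOn (s ∪ ·) ((t \ s).powerset : Set (Finset ι)) := fun v hv w hw hvw => by
    simp only [coe_powerset, Set.mem_preimage, Set.mem_powerset_iff, coe_subset] at hv hw
    rw [← union_sdiff_cancel_left (disjoint_of_subset_right hv disjoint_sdiff),
      ← union_sdiff_cancel_left (disjoint_of_subset_right hw disjoint_sdiff)]
    exact congrArg (· \ s) hvw
  rw [Icc_eq_image_powerset hst, sum_image hinj]
  calc ∑ v ∈ (t \ s).powerset, (-1 : ℝ) ^ (#(s ∪ v) - #s)
      = ∑ v ∈ (t \ s).powerset, (-1 : ℝ) ^ #v := sum_congr rfl fun v hv => by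
        rw [card_union_of_disjoint (disjoint_of_subset_right (mem_powerset.1 hv) disjoint_sdiff),
          Nat.add_sub_cancel_left]
    _ = if s = t then 1 else 0 := by
        have h := sum_powerset_neg_one_pow_card (x := t \ s)
        simp_rw [sdiff_eq_empty_iff_subset, ← Subset.antisymm_iff.trans (and_iff_right hst)] at h
        exact_mod_cast h

theorem sum_powerset_interiorLoss (s : Finset ι) :
    ∑ t ∈ s.powerset, interiorLoss t p = totalLoss s p := by
  calc ∑ t ∈ s.powerset, interiorLoss t p
      = ∑ u ∈ s.powerset, ∑ t ∈ Icc u s, (-1 : ℝ) ^ (#t - #u) * totalLoss u p := by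
        simp only [interiorLoss]
        exact sum_comm' fun t u => by
          simp only [mem_powerset, mem_Icc]
          exact ⟨fun h => ⟨⟨h.2, h.1⟩, h.2.trans h.1⟩, fun h => ⟨h.1.2, h.1.1⟩⟩
    _ = ∑ u ∈ s.powerset, if u = s then totalLoss u p else 0 :=
        sum_congr rfl fun u hu => by
          rw [← sum_mul, sum_Icc_neg_one_pow_card_sub (mem_powerset.1 hu), ite_mul, one_mul,
            zero_mul]
    _ = totalLoss s p := by simp

end Loss

section Entropy

variable {Ω α β : Type*} [Fintype Ω] (P : Ω → ℝ)

lemma entropy_eq_totalLoss_sub (hsum : ∑ ω, P ω = 1) (W : Ω → α) :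
    entropy P W = totalLoss univ P - ∑ a ∈ univ.image W, totalLoss {ω | W ω = a} P := by
  simp only [entropy, probOf, totalLoss, hsum, one_div, Real.log_inv, Real.log_one, mul_neg,
    mul_zero, sum_neg_distrib, sub_neg_eq_add]
  rw [sum_add_distrib, sum_neg_distrib,
    sum_fiberwise_of_maps_to (fun ω _ => mem_image_of_mem W (mem_univ ω))]
  ring

lemma content_eq_filter (W : Ω → α) :
    content W = ({S | ∃ ω ∈ S, ∃ ω' ∈ S, W ω ≠ W ω'} : Finset (Finset Ω)) := by
  ext S
  simp only [content, mem_filter, mem_univ, true_and, and_iff_right_iff_imp]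
  rintro ⟨ω, hω, ω', hω', hne⟩
  exact one_lt_card.2 ⟨ω, hω, ω', hω', fun h => hne (congrArg W h)⟩

lemma sum_powerset_fibers {M : Type*} [AddCommMonoid M] {f : Finset Ω → M} (hf : f ∅ = 0)
    (W : Ω → α) :
    ∑ a ∈ univ.image W, ∑ T ∈ ({ω | W ω = a} : Finset Ω).powerset, f T
      = ∑ T : Finset Ω with ∀ ω ∈ T, ∀ ω' ∈ T, W ω = W ω', f T := by
  have hdisj : (univ.image W : Set α).PairwiseDisjoint
      fun a => {T ∈ ({ω | W ω = a} : Finset Ω).powerset | T.Nonempty} := by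
    intro a _ b _ hab
    refine disjoint_left.2 fun T hTa hTb => ?_
    simp only [mem_filter, mem_powerset] at hTa hTb
    obtain ⟨ω, hω⟩ := hTa.2
    exact hab ((mem_filter.1 (hTa.1 hω)).2.symm.trans (mem_filter.1 (hTb.1 hω)).2)
  have hunion :
      (univ.image W).biUnion (fun a => {T ∈ ({ω | W ω = a} : Finset Ω).powerset | T.Nonempty})
        = ({T | (∀ ω ∈ T, ∀ ω' ∈ T, W ω = W ω') ∧ T.Nonempty} : Finset (Finset Ω)) := by
    ext T
    simp only [mem_biUnion, mem_image, mem_univ, true_and, mem_filter, mem_powerset,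
      subset_iff]
    constructor
    · rintro ⟨_, ⟨ω₀, rfl⟩, hT, hne⟩
      exact ⟨fun ω hω ω' hω' => (hT hω).trans (hT hω').symm, hne⟩
    · rintro ⟨hconst, ω₀, hω₀⟩
      exact ⟨W ω₀, ⟨ω₀, rfl⟩, fun ω hω => hconst ω hω ω₀ hω₀, ω₀, hω₀⟩
  have sum_filter_nonempty {s : Finset (Finset Ω)} :
      ∑ T ∈ s with T.Nonempty, f T = ∑ T ∈ s, f T :=
    sum_filter_of_ne fun T _ hT => nonempty_iff_ne_empty.2 fun h => hT (h ▸ hf)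
  calc ∑ a ∈ univ.image W, ∑ T ∈ ({ω | W ω = a} : Finset Ω).powerset, f T
      = ∑ a ∈ univ.image W, ∑ T ∈ ({ω | W ω = a} : Finset Ω).powerset with T.Nonempty, f T := by
        simp only [sum_filter_nonempty]
    _ = ∑ T : Finset Ω with (∀ ω ∈ T, ∀ ω' ∈ T, W ω = W ω') ∧ T.Nonempty, f T := by
        rw [← sum_biUnion hdisj, hunion]
    _ = ∑ T : Finset Ω with ∀ ω ∈ T, ∀ ω' ∈ T, W ω = W ω', f T := by
        rw [← filter_filter, sum_filter_nonempty]

theorem entropy_eq_sum_content (hsum : ∑ ω, P ω = 1) (W : Ω → α) :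
    entropy P W = ∑ S ∈ content W, interiorLoss S P := by
  have hsplit := sum_filter_add_sum_filter_not univ
    (fun S : Finset Ω => ∃ ω ∈ S, ∃ ω' ∈ S, W ω ≠ W ω') (interiorLoss · P)
  simp only [not_exists, not_and, not_not] at hsplit
  rw [entropy_eq_totalLoss_sub P hsum, ← sum_powerset_interiorLoss, powerset_univ, ← hsplit,
    content_eq_filter]
  simp only [← sum_powerset_interiorLoss,
    sum_powerset_fibers (f := (interiorLoss · P)) (interiorLoss_empty P)]
  ring

lemma probOf_comp (W : Ω → α) (k : α → β) (b : β) :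
    probOf P (k ∘ W) b = ∑ a ∈ univ.image W with k a = b, probOf P W a := by
  rw [probOf, ← sum_fiberwise_of_maps_to (s := {ω | (k ∘ W) ω = b}) (g := W)
    (t := {a ∈ univ.image W | k a = b})
    fun ω hω => mem_filter.2 ⟨mem_image_of_mem W (mem_univ ω), (mem_filter.1 hω).2⟩]
  refine sum_congr rfl fun a ha => ?_
  rw [probOf, filter_filter]
  congr 1
  ext ω
  simp only [mem_filter, mem_univ, true_and, Function.comp_apply]
  exact ⟨And.right, fun h => ⟨h ▸ (mem_filter.1 ha).2, h⟩⟩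

lemma probOf_nonneg (hP : ∀ ω, 0 ≤ P ω) (W : Ω → α) (a : α) : 0 ≤ probOf P W a :=
  sum_nonneg fun ω _ => hP ω

theorem entropy_comp_le (hP : ∀ ω, 0 ≤ P ω) (W : Ω → α) (k : α → β) :
    entropy P (k ∘ W) ≤ entropy P W := by
  have hmaps : ∀ a ∈ univ.image W, k a ∈ univ.image (k ∘ W) := by
    simp only [mem_image, mem_univ, true_and, Function.comp_apply]
    rintro _ ⟨ω, rfl⟩
    exact ⟨ω, rfl⟩
  rw [entropy, entropy, ← sum_fiberwise_of_maps_to hmaps]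
  refine sum_le_sum fun b _ => ?_
  nth_rw 1 [probOf_comp]
  rw [sum_mul]
  refine sum_le_sum fun a ha => ?_
  have hle : probOf P W a ≤ probOf P (k ∘ W) b := by
    rw [probOf_comp]
    exact single_le_sum (fun a' _ => probOf_nonneg P hP W a') ha
  rcases (probOf_nonneg P hP W a).eq_or_lt with h0 | hpos
  · simp [← h0]
  · exact mul_le_mul_of_nonneg_left (Real.log_le_log (one_div_pos.2 (hpos.trans_le hle))
      (one_div_le_one_div_of_le hpos hle)) hpos.le

lemma entropy_le_entropy_quotient_mk (hP : ∀ ω, 0 ≤ P ω) {s : Setoid Ω} {V : Ω → α}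
    (hV : s ≤ Setoid.ker V) : entropy P V ≤ entropy P (Quotient.mk s) :=
  entropy_comp_le P hP (Quotient.mk s) (Quotient.lift V fun _ _ h => hV h)

end Entropy

section Content

variable {Ω α β : Type*} [Fintype Ω]

lemma content_subset_of_factorsThrough {V : Ω → α} {W : Ω → β}
    (h : Function.FactorsThrough W V) : content W ⊆ content V := by
  simp only [content, subset_iff, mem_filter, mem_univ, true_and]
  exact fun S ⟨hcard, ω, hω, ω', hω', hne⟩ => ⟨hcard, ω, hω, ω', hω', mt (@h ω ω') hne⟩

lemma content_comp_of_injective {W : Ω → α} {k : α → β} (hk : Function.Injective k) :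
    content (k ∘ W) = content W := by
  simp [content, hk.ne_iff]

end Content

universe u

/-- logarithmic decomposition of the Gács–Körner common information.
Let `≈` be the equivalence relation generated by
`{(ω, ω') : X ω = X ω' ∨ Y ω = Y ω'}` and `Z : Ω → Ω/≈` the quotient map.  Then
`C(Z) ⊆ C(X) ∩ C(Y)`, and the Gács–Körner common information
`sup { H(f ∘ X) : f ∘ X = g ∘ Y }` equals `Σ_{S ∈ C(Z)} L°(S)`. -/
theorem gacsKorner_logarithmic_decomposition {Ω α β : Type*} [Fintype Ω] [Nonempty Ω]
    (P : Ω → ℝ) (hP : ∀ ω, 0 < P ω) (hsum : ∑ ω, P ω = 1)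
    (X : Ω → α) (Y : Ω → β)
    (s : Setoid Ω) (hs : s = Relation.EqvGen.setoid (fun ω ω' => X ω = X ω' ∨ Y ω = Y ω'))
    (Z : Ω → Quotient s) (hZ : Z = Quotient.mk s) :
    content Z ⊆ content X ∩ content Y ∧
      IsLUB {h : ℝ | ∃ (γ : Type u) (f : α → γ) (g : β → γ),
          f ∘ X = g ∘ Y ∧ h = entropy P (f ∘ X)}
        (∑ S ∈ content Z, interiorLoss S P) := by
  subst hZ
  have hmk : ∀ ⦃ω ω'⦄, X ω = X ω' ∨ Y ω = Y ω' → Quotient.mk s ω = Quotient.mk s ω' := by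
    subst hs
    exact fun ω ω' h => Quotient.sound (Relation.EqvGen.rel ω ω' h)
  have hs_le : ∀ t : Setoid Ω, (∀ ω ω', X ω = X ω' ∨ Y ω = Y ω' → t ω ω') → s ≤ t := by
    subst hs
    exact fun t => Setoid.eqvGen_le
  refine ⟨subset_inter (content_subset_of_factorsThrough fun _ _ h => hmk (Or.inl h))
    (content_subset_of_factorsThrough fun _ _ h => hmk (Or.inr h)), ?_⟩
  rw [← entropy_eq_sum_content P hsum]
  refine IsGreatest.isLUB ⟨?_, ?_⟩
  · -- `Z` itself, relabelled injectively into `Type u`, is a common function of `X` and `Y`.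
    let e := equivShrink.{u} (Quotient s)
    have : Nonempty (Shrink.{u} (Quotient s)) := ⟨e (Quotient.mk s (Classical.arbitrary Ω))⟩
    obtain ⟨f, hf⟩ := (Function.factorsThrough_iff (e ∘ Quotient.mk s)).1
      fun _ _ h => congrArg e (hmk (Or.inl h))
    obtain ⟨g, hg⟩ := (Function.factorsThrough_iff (e ∘ Quotient.mk s)).1
      fun _ _ h => congrArg e (hmk (Or.inr h))
    refine ⟨_, f, g, hf.symm.trans hg, ?_⟩
    rw [← hf, entropy_eq_sum_content P hsum, entropy_eq_sum_content P hsum,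
      content_comp_of_injective e.injective]
  · rintro _ ⟨γ, f, g, hfg, rfl⟩
    refine entropy_le_entropy_quotient_mk P (fun ω => (hP ω).le) (hs_le _ fun ω ω' h => ?_)
    rcases h with hX | hY
    · exact congrArg f hX
    · exact (congrFun hfg ω).trans ((congrArg g hY).trans (congrFun hfg ω').symm)
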